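/- arXiv:2201.06694 — 2 statements merged into one kernel-verified Lean document; each statement's English description precedes it below -/
import Mathlib

section
/- Let Π = Π(ρ, F) be the transition matrix of the network formation game on S = (E → Bool). Then for every natural number τ with τ ≥ card E, all entries of Π^τ are strictly positive; in particular, the induced Markov chain on S is irreducible and aperiodic. -/
open Matrix Finset Filter

/-- Flip the link `e` in network `g`. -/
def flipL {E : Type*} [DecidableEq E] (e : E) (g : E → Bool) : E → Bool :=
  Function.update g e (!(g e))

/-- The one-step transition matrix of the network formation game. -/
noncomputable def netPi {E : Type*} [DecidableEq E] [Fintype E]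
    (ρ : E → (E → Bool) → ℝ) (F : (E → Bool) → E → ℝ) :
    Matrix (E → Bool) (E → Bool) ℝ :=
  Matrix.of fun g w =>
    if g = w then ∑ e, ρ e g * (1 - F g e)
    else ∑ e, if w = flipL e g then ρ e g * F g e else 0

/-- A meeting function: strictly positive selection probabilities summing to one. -/
def IsMeeting {E : Type*} [Fintype E] (ρ : E → (E → Bool) → ℝ) : Prop :=
  (∀ e g, 0 < ρ e g) ∧ ∀ g, ∑ e, ρ e g = 1

/-- An acceptance function: probabilities strictly between 0 and 1, complementary under flips. -/
def IsAcceptance {E : Type*} [DecidableEq E] (F : (E → Bool) → E → ℝ) : Prop :=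
  (∀ g e, 0 < F g e ∧ F g e < 1) ∧ ∀ g e, F g e + F (flipL e g) e = 1

section Aux

variable {E : Type*} [DecidableEq E] [Fintype E]

lemma netPi_nonneg (ρ : E → (E → Bool) → ℝ) (F : (E → Bool) → E → ℝ)
    (hρ : IsMeeting ρ) (hF : IsAcceptance F) (g w : E → Bool) :
    0 ≤ netPi ρ F g w := by
  unfold netPi
  simp only [Matrix.of_apply]
  split_ifs with h
  · exact Finset.sum_nonneg fun e _ => mul_nonneg (hρ.1 e g).le
      (by linarith [(hF.1 g e).2])
  · refine Finset.sum_nonneg fun e _ => ?_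
    split_ifs
    · exact mul_nonneg (hρ.1 e g).le (hF.1 g e).1.le
    · exact le_refl 0

lemma netPi_diag_pos [Nonempty E] (ρ : E → (E → Bool) → ℝ) (F : (E → Bool) → E → ℝ)
    (hρ : IsMeeting ρ) (hF : IsAcceptance F) (g : E → Bool) :
    0 < netPi ρ F g g := by
  unfold netPi
  simp only [Matrix.of_apply, if_pos rfl]
  exact Finset.sum_pos (fun e _ => mul_pos (hρ.1 e g) (by linarith [(hF.1 g e).2]))
    Finset.univ_nonempty

lemma flipL_ne (e : E) (g : E → Bool) : g ≠ flipL e g := by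
  intro h
  have := congrFun h e
  simp [flipL] at this

lemma netPi_flip_pos (ρ : E → (E → Bool) → ℝ) (F : (E → Bool) → E → ℝ)
    (hρ : IsMeeting ρ) (hF : IsAcceptance F) (e : E) (g : E → Bool) :
    0 < netPi ρ F g (flipL e g) := by
  unfold netPi
  simp only [Matrix.of_apply, if_neg (flipL_ne e g)]
  have hterm : 0 < (if flipL e g = flipL e g then ρ e g * F g e else 0) := by
    simp [mul_pos (hρ.1 e g) (hF.1 g e).1]
  refine lt_of_lt_of_le hterm (Finset.single_le_sum (f := fun e' =>
    if flipL e g = flipL e' g then ρ e' g * F g e' else 0) (fun e' _ => ?_)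
    (Finset.mem_univ e))
  split_ifs
  · exact mul_nonneg (hρ.1 e' g).le (hF.1 g e').1.le
  · exact le_refl 0

lemma netPi_pow_nonneg (ρ : E → (E → Bool) → ℝ) (F : (E → Bool) → E → ℝ)
    (hρ : IsMeeting ρ) (hF : IsAcceptance F) (τ : ℕ) (g w : E → Bool) :
    0 ≤ (netPi ρ F ^ τ) g w := by
  induction τ generalizing g w with
  | zero => simp [Matrix.one_apply]; split_ifs <;> norm_num
  | succ n ih =>
    rw [pow_succ', Matrix.mul_apply]
    exact Finset.sum_nonneg fun m _ =>
      mul_nonneg (netPi_nonneg ρ F hρ hF g m) (ih m w)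

lemma mul_entry_pos {A B : Matrix (E → Bool) (E → Bool) ℝ}
    (hA : ∀ g w, 0 ≤ A g w) (hB : ∀ g w, 0 ≤ B g w) {g m w : E → Bool}
    (h1 : 0 < A g m) (h2 : 0 < B m w) : 0 < (A * B) g w := by
  rw [Matrix.mul_apply]
  refine lt_of_lt_of_le (mul_pos h1 h2) (Finset.single_le_sum
    (f := fun m' => A g m' * B m' w) (fun m' _ => mul_nonneg (hA g m') (hB m' w))
    (Finset.mem_univ m))

end Aux

/-- For `τ ≥ card E`, all entries of `Π^τ` are strictly positive: the chain is
irreducible and aperiodic. -/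
theorem powEntry_pos_of_card_le {E : Type*} [DecidableEq E] [Fintype E] [Nonempty E]
    (ρ : E → (E → Bool) → ℝ) (F : (E → Bool) → E → ℝ)
    (hρ : IsMeeting ρ) (hF : IsAcceptance F) :
    ∀ τ : ℕ, Fintype.card E ≤ τ → ∀ g w : E → Bool, 0 < (netPi ρ F ^ τ) g w := by
  have key : ∀ τ : ℕ, ∀ g w : E → Bool,
      (Finset.univ.filter fun e => g e ≠ w e).card ≤ τ → 0 < (netPi ρ F ^ τ) g w := by
    intro τ
    induction τ with
    | zero =>
      intro g w h
      have hgw : g = w := by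
        funext e
        by_contra he
        have : e ∈ Finset.univ.filter fun e => g e ≠ w e := by simp [he]
        have := Finset.card_pos.mpr ⟨e, this⟩
        omega
      subst hgw
      simp [Matrix.one_apply]
    | succ n ih =>
      intro g w h
      rw [pow_succ']
      by_cases hgw : g = w
      · subst hgw
        exact mul_entry_pos (netPi_nonneg ρ F hρ hF)
          (netPi_pow_nonneg ρ F hρ hF n) (netPi_diag_pos ρ F hρ hF g)
          (ih g g (by simp))
      · obtain ⟨e, he⟩ : ∃ e, g e ≠ w e := by
          by_contra hc
          push_neg at hc
          exact hgw (funext hc)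
        have hmem : e ∈ Finset.univ.filter fun e => g e ≠ w e := by simp [he]
        have hsub : (Finset.univ.filter fun e' => flipL e g e' ≠ w e') =
            (Finset.univ.filter fun e' => g e' ≠ w e').erase e := by
          ext e'
          rw [Finset.mem_filter, Finset.mem_erase, Finset.mem_filter]
          by_cases h' : e' = e
          · subst h'
            simp only [Finset.mem_erase, ne_eq, not_true_eq_false, false_and,
              Finset.mem_filter, Finset.mem_univ, true_and, iff_false, not_not, flipL]
            simp only [Function.update_self]
            revert he
            cases g e' <;> cases w e' <;> simp
          · simp [flipL, Function.update_of_ne h', h']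
        have hcard : (Finset.univ.filter fun e' => flipL e g e' ≠ w e').card ≤ n := by
          rw [hsub]
          have := Finset.card_erase_of_mem hmem
          omega
        exact mul_entry_pos (netPi_nonneg ρ F hρ hF)
          (netPi_pow_nonneg ρ F hρ hF n) (netPi_flip_pos ρ F hρ hF e g)
          (ih (flipL e g) w hcard)
  intro τ hτ g w
  refine key τ g w (le_trans ?_ hτ)
  exact le_trans (Finset.card_filter_le _ _) (by simp)
end

section
/- Let Π = Π(ρ, F) be the transition matrix of the network formation game on S = (E → Bool). Then there exists a unique stationary distribution: a unique vector π : S → ℝ such that π g ≥ 0 for all g ∈ S, ∑_{g ∈ S} π g = 1, and ∑_{g ∈ S} π g * Π g w = π w for every w ∈ S. -/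
/-!
The power `Π ^ |E|` has strictly positive entries: `w` is reached from `g` by flipping the
`hammingDist g w` links where they differ, and the remaining steps are spent on the positive
self-loops. If a row-stochastic matrix has a strictly positive power, each of its left fixed
vectors `v` has constant sign, since otherwise the strict triangle inequality would give
`∑ |v| = ∑_w |∑_g v g Π^k g w| < ∑ |v|`. A fixed vector exists because `Π *ᵥ 1 = 1` makes
`Π - 1` singular; flip its sign if needed and normalise. Two stationary distributions differ
by a fixed vector of total mass zero, which by the sign property vanishes.
-/

open Matrix Finset Filter

theorem Finset.abs_sum_lt_sum_abs {ι α : Type*} [AddCommGroup α] [LinearOrder α]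
    [IsOrderedAddMonoid α] {s : Finset ι} {f : ι → α} {a b : ι} (ha : a ∈ s) (hb : b ∈ s)
    (hfa : f a < 0) (hfb : 0 < f b) : |∑ i ∈ s, f i| < ∑ i ∈ s, |f i| := by
  refine abs_lt.2 ⟨?_, ?_⟩
  · rw [← sum_neg_distrib]
    refine sum_lt_sum (fun i _ => neg_abs_le (f i)) ⟨b, hb, ?_⟩
    rw [abs_of_pos hfb]
    exact (neg_neg_of_pos hfb).trans hfb
  · refine sum_lt_sum (fun i _ => le_abs_self (f i)) ⟨a, ha, ?_⟩
    rw [abs_of_neg hfa]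
    exact hfa.trans (neg_pos.2 hfa)

namespace Matrix

theorem mul_apply_pos {l m n R : Type*} [Fintype m] [Semiring R] [PartialOrder R]
    [IsStrictOrderedRing R] {A : Matrix l m R} {B : Matrix m n R}
    (hA : ∀ i j, 0 ≤ A i j) (hB : ∀ i j, 0 ≤ B i j) {i : l} {k : m} {j : n}
    (hik : 0 < A i k) (hkj : 0 < B k j) : 0 < (A * B) i j :=
  sum_pos' (fun k' _ => mul_nonneg (hA i k') (hB k' j)) ⟨k, mem_univ k, mul_pos hik hkj⟩

variable {S : Type*} [Fintype S] [DecidableEq S] {M : Matrix S S ℝ}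

theorem vecMul_pow_eq_self {v : S → ℝ} (hv : v ᵥ* M = v) (k : ℕ) : v ᵥ* M ^ k = v := by
  induction k with
  | zero => simp
  | succ k ih => rw [pow_succ, ← vecMul_vecMul, ih, hv]

theorem exists_ne_zero_vecMul_eq_self [Nonempty S] (hM : M *ᵥ 1 = 1) :
    ∃ v ≠ 0, v ᵥ* M = v := by
  have hdet : (M - 1).det = 0 :=
    exists_mulVec_eq_zero_iff.1 ⟨1, one_ne_zero, by rw [sub_mulVec, hM, one_mulVec, sub_self]⟩
  obtain ⟨v, hv0, hv⟩ := exists_vecMul_eq_zero_iff.2 hdet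
  exact ⟨v, hv0, by rwa [vecMul_sub, vecMul_one, sub_eq_zero] at hv⟩

theorem nonneg_or_nonpos_of_vecMul_eq_self (hM : M ∈ rowStochastic ℝ S)
    (hpos : ∀ i j, 0 < M i j) {v : S → ℝ} (hv : v ᵥ* M = v) :
    (∀ i, 0 ≤ v i) ∨ ∀ i, v i ≤ 0 := by
  by_contra! ⟨⟨a, ha⟩, b, hb⟩
  have hcol : ∀ j, |v j| < ∑ i, |v i| * M i j := fun j => calc
    |v j| = |∑ i, v i * M i j| := congrArg abs (congrFun hv j).symm
    _ < ∑ i, |v i * M i j| :=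
        abs_sum_lt_sum_abs (mem_univ a) (mem_univ b)
          (mul_neg_of_neg_of_pos ha (hpos a j)) (mul_pos hb (hpos b j))
    _ = ∑ i, |v i| * M i j := by simp only [abs_mul, abs_of_pos (hpos _ j)]
  have : ∑ j, |v j| < ∑ i, |v i| := calc
    ∑ j, |v j| < ∑ j, ∑ i, |v i| * M i j :=
        sum_lt_sum_of_nonempty ⟨a, mem_univ a⟩ fun j _ => hcol j
    _ = ∑ i, |v i| * ∑ j, M i j := by rw [sum_comm]; simp only [mul_sum]
    _ = ∑ i, |v i| := by simp only [sum_row_of_mem_rowStochastic hM, mul_one]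
  exact this.false

theorem existsUnique_stationary_of_pow_pos [Nonempty S] (hM : M ∈ rowStochastic ℝ S) {k : ℕ}
    (hpos : ∀ i j, 0 < (M ^ k) i j) :
    ∃! π : S → ℝ, (∀ i, 0 ≤ π i) ∧ ∑ i, π i = 1 ∧ π ᵥ* M = π := by
  have hsign : ∀ v : S → ℝ, v ᵥ* M = v → (∀ i, 0 ≤ v i) ∨ ∀ i, v i ≤ 0 := fun v hv =>
    nonneg_or_nonpos_of_vecMul_eq_self (pow_mem hM k) hpos (vecMul_pow_eq_self hv k)
  obtain ⟨v, hv0, hv⟩ := exists_ne_zero_vecMul_eq_self hM.2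
  obtain ⟨u, hu0, hu, hu_nonneg⟩ : ∃ u : S → ℝ, u ≠ 0 ∧ u ᵥ* M = u ∧ ∀ i, 0 ≤ u i := by
    rcases hsign v hv with h | h
    · exact ⟨v, hv0, hv, h⟩
    · exact ⟨-v, neg_ne_zero.2 hv0, by rw [neg_vecMul, hv], fun i => neg_nonneg.2 (h i)⟩
  have hs : 0 < ∑ i, u i := by
    obtain ⟨i, hi⟩ := Function.ne_iff.1 hu0
    exact sum_pos' (fun i _ => hu_nonneg i) ⟨i, mem_univ i, (hu_nonneg i).lt_of_ne' hi⟩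
  refine ⟨(∑ i, u i)⁻¹ • u, ⟨fun i => ?_, ?_, ?_⟩, ?_⟩
  · exact smul_nonneg (inv_nonneg.2 hs.le) (hu_nonneg i)
  · simp only [Pi.smul_apply, smul_eq_mul, ← mul_sum, inv_mul_cancel₀ hs.ne']
  · rw [smul_vecMul, hu]
  · rintro π ⟨-, hπ_sum, hπ⟩
    set d := π - (∑ i, u i)⁻¹ • u
    have hd : d ᵥ* M = d := by rw [sub_vecMul, smul_vecMul, hπ, hu]
    have hd_sum : ∑ i, d i = 0 := by
      simp only [d, Pi.sub_apply, Pi.smul_apply, smul_eq_mul, sum_sub_distrib, ← mul_sum,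
        inv_mul_cancel₀ hs.ne', hπ_sum, sub_self]
    have hd0 : d = 0 := by
      funext i
      rcases hsign d hd with h | h
      · exact (sum_eq_zero_iff_of_nonneg fun i _ => h i).1 hd_sum i (mem_univ i)
      · exact (sum_eq_zero_iff_of_nonpos fun i _ => h i).1 hd_sum i (mem_univ i)
    exact sub_eq_zero.1 hd0

end Matrix

section Network

variable {E : Type*} [DecidableEq E]

theorem flipL_apply_self (e : E) (g : E → Bool) : flipL e g e = !g e := by
  simp [flipL]

theorem flipL_apply_of_ne {e e' : E} (h : e' ≠ e) (g : E → Bool) : flipL e g e' = g e' :=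
  Function.update_of_ne h _ _

theorem flipL_ne_self (e : E) (g : E → Bool) : flipL e g ≠ g := fun h => by
  simpa [flipL_apply_self] using congrFun h e

theorem flipL_left_inj {e e' : E} {g : E → Bool} : flipL e g = flipL e' g ↔ e = e' := by
  refine ⟨fun h => by_contra fun hne => ?_, fun h => h ▸ rfl⟩
  simpa [flipL_apply_self, flipL_apply_of_ne hne] using congrFun h e

theorem hammingDist_flipL_add_one [Fintype E] {e : E} {g w : E → Bool} (h : g e ≠ w e) :
    hammingDist (flipL e g) w + 1 = hammingDist g w := by
  have hset : ({i | flipL e g i ≠ w i} : Finset E) = ({i | g i ≠ w i} : Finset E).erase e := by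
    ext i
    rcases eq_or_ne i e with rfl | hi
    · cases hg : g i <;> cases hw : w i <;> simp_all [flipL_apply_self]
    · simp [flipL_apply_of_ne hi, hi]
  rw [hammingDist, hammingDist, hset, card_erase_add_one (by simpa using h)]

variable [Fintype E] {ρ : E → (E → Bool) → ℝ} {F : (E → Bool) → E → ℝ}

theorem netPi_apply_self (g : E → Bool) : netPi ρ F g g = ∑ e, ρ e g * (1 - F g e) := by
  simp [netPi]

theorem netPi_apply_flipL (e : E) (g : E → Bool) : netPi ρ F g (flipL e g) = ρ e g * F g e := by
  rw [netPi, of_apply, if_neg (flipL_ne_self e g).symm]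
  simp only [flipL_left_inj, sum_ite_eq, mem_univ, if_true]

theorem netPi_mem_rowStochastic (hρ : IsMeeting ρ) (hF : ∀ g e, 0 < F g e ∧ F g e < 1) :
    netPi ρ F ∈ rowStochastic ℝ (E → Bool) := by
  have hstay : ∀ g e, 0 < ρ e g * (1 - F g e) := fun g e =>
    mul_pos (hρ.1 e g) (sub_pos.2 (hF g e).2)
  have hmove : ∀ g e, 0 < ρ e g * F g e := fun g e => mul_pos (hρ.1 e g) (hF g e).1
  refine mem_rowStochastic_iff_sum.2 ⟨fun g w => ?_, fun g => ?_⟩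
  · rw [netPi, of_apply]
    split_ifs
    · exact sum_nonneg fun e _ => (hstay g e).le
    · exact sum_nonneg fun e _ => by split_ifs <;> simp [(hmove g e).le]
  · have hoff : ∑ w ∈ univ.erase g, netPi ρ F g w = ∑ e, ρ e g * F g e := by
      rw [sum_congr rfl fun w hw => by rw [netPi, of_apply, if_neg (ne_of_mem_erase hw).symm],
        sum_comm]
      refine sum_congr rfl fun e _ => ?_
      rw [sum_ite_eq', if_pos (mem_erase.2 ⟨flipL_ne_self e g, mem_univ _⟩)]
    rw [← add_sum_erase _ _ (mem_univ g), hoff, netPi_apply_self, ← sum_add_distrib]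
    simp only [mul_sub, mul_one, sub_add_cancel, hρ.2]

theorem netPi_pow_apply_pos [Nonempty E] (hρ : IsMeeting ρ)
    (hF : ∀ g e, 0 < F g e ∧ F g e < 1) {k : ℕ} {g w : E → Bool} (h : hammingDist g w ≤ k) :
    0 < (netPi ρ F ^ k) g w := by
  induction k generalizing g with
  | zero => simp [hammingDist_eq_zero.1 (Nat.le_zero.1 h)]
  | succ k ih =>
    have hM := netPi_mem_rowStochastic hρ hF
    obtain ⟨u, hgu, huw⟩ : ∃ u, 0 < netPi ρ F g u ∧ hammingDist u w ≤ k := by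
      by_cases hgw : g = w
      · refine ⟨g, ?_, by simp [hgw]⟩
        rw [netPi_apply_self]
        exact sum_pos (fun e _ => mul_pos (hρ.1 e g) (sub_pos.2 (hF g e).2)) univ_nonempty
      · obtain ⟨e, he⟩ := Function.ne_iff.1 hgw
        refine ⟨flipL e g, ?_, by have := hammingDist_flipL_add_one he; omega⟩
        rw [netPi_apply_flipL]
        exact mul_pos (hρ.1 e g) (hF g e).1
    rw [pow_succ']
    exact mul_apply_pos hM.1 (pow_mem hM k).1 hgu (ih huw)

end Network

/-- Existence and uniqueness of the stationary distribution of the network formation game. -/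
theorem exists_unique_stationary {E : Type*} [DecidableEq E] [Fintype E] [Nonempty E]
    (ρ : E → (E → Bool) → ℝ) (F : (E → Bool) → E → ℝ)
    (hρ : IsMeeting ρ) (hF : IsAcceptance F) :
    ∃! π : (E → Bool) → ℝ, (∀ g, 0 ≤ π g) ∧ (∑ g, π g = 1) ∧
      ∀ w, ∑ g, π g * netPi ρ F g w = π w := by
  have hpos : ∀ g w, 0 < (netPi ρ F ^ Fintype.card E) g w := fun _ _ =>
    netPi_pow_apply_pos hρ hF.1 hammingDist_le_card_fintype
  simpa only [funext_iff, vecMul, dotProduct] using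
    existsUnique_stationary_of_pow_pos (netPi_mem_rowStochastic hρ hF.1) hpos
end
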